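/- Let A0 be the 4×4 complex matrix with rows (i, −i/4, 0, i/2), (i/4, −i, −i/2, 0), (0, i/2, i, −i/4), (−i/2, 0, i/4, −i). For φ ∈ ℝ define a1(φ) := (1/2)·cos(√15·φ/4) + (1/2)·cos(√7·φ/4) + i·[(2/√15)·sin(√15·φ/4) + (2/√7)·sin(√7·φ/4)], a2(φ) := (i/2)·[(1/√15)·sin(√15·φ/4) − (3/√7)·sin(√7·φ/4)], a3(φ) := (1/2)·cos(√15·φ/4) − (1/2)·cos(√7·φ/4) + i·[(2/√15)·sin(√15·φ/4) − (2/√7)·sin(√7·φ/4)], a4(φ) := (i/2)·[(1/√15)·sin(√15·φ/4) + (3/√7)·sin(√7·φ/4)]. Then for every φ ∈ ℝ, exp(φ·A0) equals the 4×4 matrix with rows (a1(φ), a2(φ), a3(φ), a4(φ)), (conj a2(φ), conj a1(φ), conj a4(φ), conj a3(φ)), (a3(φ), a4(φ), a1(φ), a2(φ)), (conj a4(φ), conj a3(φ), conj a2(φ), conj a1(φ)). -/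

import Mathlib

open ComplexConjugate

/-- The zero-distance limit of the coefficient matrix of the linearized evolution on
the degenerate spatial modes `±1` in the leapfrogging problem. -/
noncomputable def A0 : Matrix (Fin 4) (Fin 4) ℂ :=
  !![Complex.I, -Complex.I / 4, 0, Complex.I / 2;
     Complex.I / 4, -Complex.I, -Complex.I / 2, 0;
     0, Complex.I / 2, Complex.I, -Complex.I / 4;
     -Complex.I / 2, 0, Complex.I / 4, -Complex.I]

noncomputable def a1 (φ : ℝ) : ℂ :=
  ((Real.cos (Real.sqrt 15 * φ / 4) / 2 + Real.cos (Real.sqrt 7 * φ / 4) / 2 : ℝ) : ℂ)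
    + Complex.I * ((2 / Real.sqrt 15 * Real.sin (Real.sqrt 15 * φ / 4)
        + 2 / Real.sqrt 7 * Real.sin (Real.sqrt 7 * φ / 4) : ℝ) : ℂ)

noncomputable def a2 (φ : ℝ) : ℂ :=
  (Complex.I / 2) * ((1 / Real.sqrt 15 * Real.sin (Real.sqrt 15 * φ / 4)
      - 3 / Real.sqrt 7 * Real.sin (Real.sqrt 7 * φ / 4) : ℝ) : ℂ)

noncomputable def a3 (φ : ℝ) : ℂ :=
  ((Real.cos (Real.sqrt 15 * φ / 4) / 2 - Real.cos (Real.sqrt 7 * φ / 4) / 2 : ℝ) : ℂ)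
    + Complex.I * ((2 / Real.sqrt 15 * Real.sin (Real.sqrt 15 * φ / 4)
        - 2 / Real.sqrt 7 * Real.sin (Real.sqrt 7 * φ / 4) : ℝ) : ℂ)

noncomputable def a4 (φ : ℝ) : ℂ :=
  (Complex.I / 2) * ((1 / Real.sqrt 15 * Real.sin (Real.sqrt 15 * φ / 4)
      + 3 / Real.sqrt 7 * Real.sin (Real.sqrt 7 * φ / 4) : ℝ) : ℂ)

namespace Stmt14Aux

lemma hs2 : (Real.sqrt 15:ℂ)^2 = 15 := by
  rw [← Complex.ofReal_pow, Real.sq_sqrt (by norm_num)]; norm_num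

lemma ht2 : (Real.sqrt 7:ℂ)^2 = 7 := by
  rw [← Complex.ofReal_pow, Real.sq_sqrt (by norm_num)]; norm_num

lemma hs0 : (Real.sqrt 15:ℂ) ≠ 0 := by
  simpa using (Real.sqrt_ne_zero' (x := 15)).2 (by norm_num)

lemma ht0 : (Real.sqrt 7:ℂ) ≠ 0 := by
  simpa using (Real.sqrt_ne_zero' (x := 7)).2 (by norm_num)

lemma d2s : (2:ℂ) / (Real.sqrt 15:ℂ) = 2 * (Real.sqrt 15:ℂ) / 15 := by
  rw [div_eq_div_iff hs0 (by norm_num)]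
  first
    | linear_combination (2:ℂ) * hs2
    | linear_combination (-2:ℂ) * hs2

lemma d1s : (1:ℂ) / (Real.sqrt 15:ℂ) = (Real.sqrt 15:ℂ) / 15 := by
  rw [div_eq_div_iff hs0 (by norm_num)]
  first
    | linear_combination (1:ℂ) * hs2
    | linear_combination (-1:ℂ) * hs2

lemma d2t : (2:ℂ) / (Real.sqrt 7:ℂ) = 2 * (Real.sqrt 7:ℂ) / 7 := by
  rw [div_eq_div_iff ht0 (by norm_num)]
  first
    | linear_combination (2:ℂ) * ht2
    | linear_combination (-2:ℂ) * ht2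

lemma d3t : (3:ℂ) / (Real.sqrt 7:ℂ) = 3 * (Real.sqrt 7:ℂ) / 7 := by
  rw [div_eq_div_iff ht0 (by norm_num)]
  first
    | linear_combination (3:ℂ) * ht2
    | linear_combination (-3:ℂ) * ht2

lemma ha1 (φ : ℝ) : a1 φ =
    (Real.cos (Real.sqrt 15 * φ / 4):ℂ)/2 + (Real.cos (Real.sqrt 7 * φ / 4):ℂ)/2
      + Complex.I * (2 * (Real.sqrt 15:ℂ) * (Real.sin (Real.sqrt 15 * φ / 4):ℂ) / 15
          + 2 * (Real.sqrt 7:ℂ) * (Real.sin (Real.sqrt 7 * φ / 4):ℂ) / 7) := by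
  simp only [a1]; push_cast; rw [d2s, d2t]; ring

lemma ha2 (φ : ℝ) : a2 φ =
    (Complex.I/2) * ((Real.sqrt 15:ℂ) * (Real.sin (Real.sqrt 15 * φ / 4):ℂ) / 15
        - 3 * (Real.sqrt 7:ℂ) * (Real.sin (Real.sqrt 7 * φ / 4):ℂ) / 7) := by
  simp only [a2]; push_cast; rw [d1s, d3t]; ring

lemma ha3 (φ : ℝ) : a3 φ =
    (Real.cos (Real.sqrt 15 * φ / 4):ℂ)/2 - (Real.cos (Real.sqrt 7 * φ / 4):ℂ)/2
      + Complex.I * (2 * (Real.sqrt 15:ℂ) * (Real.sin (Real.sqrt 15 * φ / 4):ℂ) / 15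
          - 2 * (Real.sqrt 7:ℂ) * (Real.sin (Real.sqrt 7 * φ / 4):ℂ) / 7) := by
  simp only [a3]; push_cast; rw [d2s, d2t]; ring

lemma ha4 (φ : ℝ) : a4 φ =
    (Complex.I/2) * ((Real.sqrt 15:ℂ) * (Real.sin (Real.sqrt 15 * φ / 4):ℂ) / 15
        + 3 * (Real.sqrt 7:ℂ) * (Real.sin (Real.sqrt 7 * φ / 4):ℂ) / 7) := by
  simp only [a4]; push_cast; rw [d1s, d3t]; ring

lemma hca1 (φ : ℝ) : conj (a1 φ) =
    (Real.cos (Real.sqrt 15 * φ / 4):ℂ)/2 + (Real.cos (Real.sqrt 7 * φ / 4):ℂ)/2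
      - Complex.I * (2 * (Real.sqrt 15:ℂ) * (Real.sin (Real.sqrt 15 * φ / 4):ℂ) / 15
          + 2 * (Real.sqrt 7:ℂ) * (Real.sin (Real.sqrt 7 * φ / 4):ℂ) / 7) := by
  rw [ha1]
  simp only [map_add, map_sub, map_mul, map_div₀, map_ofNat, Complex.conj_I,
    Complex.conj_ofReal]
  ring

lemma hca2 (φ : ℝ) : conj (a2 φ) =
    -((Complex.I/2) * ((Real.sqrt 15:ℂ) * (Real.sin (Real.sqrt 15 * φ / 4):ℂ) / 15
        - 3 * (Real.sqrt 7:ℂ) * (Real.sin (Real.sqrt 7 * φ / 4):ℂ) / 7)) := by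
  rw [ha2]
  simp only [map_add, map_sub, map_mul, map_div₀, map_ofNat, Complex.conj_I,
    Complex.conj_ofReal]
  ring

lemma hca3 (φ : ℝ) : conj (a3 φ) =
    (Real.cos (Real.sqrt 15 * φ / 4):ℂ)/2 - (Real.cos (Real.sqrt 7 * φ / 4):ℂ)/2
      - Complex.I * (2 * (Real.sqrt 15:ℂ) * (Real.sin (Real.sqrt 15 * φ / 4):ℂ) / 15
          - 2 * (Real.sqrt 7:ℂ) * (Real.sin (Real.sqrt 7 * φ / 4):ℂ) / 7) := by
  rw [ha3]
  simp only [map_add, map_sub, map_mul, map_div₀, map_ofNat, Complex.conj_I,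
    Complex.conj_ofReal]
  ring

lemma hca4 (φ : ℝ) : conj (a4 φ) =
    -((Complex.I/2) * ((Real.sqrt 15:ℂ) * (Real.sin (Real.sqrt 15 * φ / 4):ℂ) / 15
        + 3 * (Real.sqrt 7:ℂ) * (Real.sin (Real.sqrt 7 * φ / 4):ℂ) / 7)) := by
  rw [ha4]
  simp only [map_add, map_sub, map_mul, map_div₀, map_ofNat, Complex.conj_I,
    Complex.conj_ofReal]
  ring

noncomputable def Pm : Matrix (Fin 4) (Fin 4) ℂ :=
  !![1, 1, 1, 1;
     (Real.sqrt 15:ℂ) - 4, -(Real.sqrt 15:ℂ) - 4, (4 - (Real.sqrt 7:ℂ))/3, (4 + (Real.sqrt 7:ℂ))/3;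
     1, 1, -1, -1;
     (Real.sqrt 15:ℂ) - 4, -(Real.sqrt 15:ℂ) - 4, -((4 - (Real.sqrt 7:ℂ))/3), -((4 + (Real.sqrt 7:ℂ))/3)]

noncomputable def Qm : Matrix (Fin 4) (Fin 4) ℂ :=
  !![(15 + 4*(Real.sqrt 15:ℂ))/60, (Real.sqrt 15:ℂ)/60, (15 + 4*(Real.sqrt 15:ℂ))/60, (Real.sqrt 15:ℂ)/60;
     (15 - 4*(Real.sqrt 15:ℂ))/60, -((Real.sqrt 15:ℂ)/60), (15 - 4*(Real.sqrt 15:ℂ))/60, -((Real.sqrt 15:ℂ)/60);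
     (7 + 4*(Real.sqrt 7:ℂ))/28, -(3*(Real.sqrt 7:ℂ)/28), -((7 + 4*(Real.sqrt 7:ℂ))/28), 3*(Real.sqrt 7:ℂ)/28;
     (7 - 4*(Real.sqrt 7:ℂ))/28, 3*(Real.sqrt 7:ℂ)/28, -((7 - 4*(Real.sqrt 7:ℂ))/28), -(3*(Real.sqrt 7:ℂ)/28)]

lemma hPQ : Pm * Qm = 1 := by
  ext i j
  fin_cases i <;> fin_cases j <;>
    simp [Pm, Qm, Matrix.mul_apply, Fin.sum_univ_four, Matrix.one_apply] <;>
    first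
      | ring1
      | linear_combination ((2:ℂ)/15) * hs2 + ((-2:ℂ)/21) * ht2
      | linear_combination ((1:ℂ)/30) * hs2 + ((1:ℂ)/14) * ht2
      | linear_combination ((2:ℂ)/15) * hs2 + ((2:ℂ)/21) * ht2
      | linear_combination ((1:ℂ)/30) * hs2 + ((-1:ℂ)/14) * ht2
      | linear_combination ((-2:ℂ)/15) * hs2 + ((2:ℂ)/21) * ht2
      | linear_combination ((-1:ℂ)/30) * hs2 + ((-1:ℂ)/14) * ht2
      | linear_combination ((-2:ℂ)/15) * hs2 + ((-2:ℂ)/21) * ht2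
      | linear_combination ((-1:ℂ)/30) * hs2 + ((1:ℂ)/14) * ht2

lemma hQP : Qm * Pm = 1 := by
  ext i j
  fin_cases i <;> fin_cases j <;>
    simp [Pm, Qm, Matrix.mul_apply, Fin.sum_univ_four, Matrix.one_apply] <;>
    first
      | ring1
      | linear_combination ((1:ℂ)/30) * hs2
      | linear_combination ((-1:ℂ)/30) * hs2
      | linear_combination ((1:ℂ)/14) * ht2
      | linear_combination ((-1:ℂ)/14) * ht2

noncomputable def Um : (Matrix (Fin 4) (Fin 4) ℂ)ˣ := ⟨Pm, Qm, hPQ, hQP⟩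

noncomputable def vv (φ : ℝ) : Fin 4 → ℂ :=
  ![((Real.sqrt 15 * φ / 4 : ℝ):ℂ) * Complex.I, ((-(Real.sqrt 15 * φ / 4) : ℝ):ℂ) * Complex.I,
    ((Real.sqrt 7 * φ / 4 : ℝ):ℂ) * Complex.I, ((-(Real.sqrt 7 * φ / 4) : ℝ):ℂ) * Complex.I]

noncomputable def ww (φ : ℝ) : Fin 4 → ℂ :=
  ![(Real.cos (Real.sqrt 15 * φ / 4):ℂ) + (Real.sin (Real.sqrt 15 * φ / 4):ℂ) * Complex.I,
    (Real.cos (Real.sqrt 15 * φ / 4):ℂ) - (Real.sin (Real.sqrt 15 * φ / 4):ℂ) * Complex.I,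
    (Real.cos (Real.sqrt 7 * φ / 4):ℂ) + (Real.sin (Real.sqrt 7 * φ / 4):ℂ) * Complex.I,
    (Real.cos (Real.sqrt 7 * φ / 4):ℂ) - (Real.sin (Real.sqrt 7 * φ / 4):ℂ) * Complex.I]

lemma keyexp (θ : ℝ) : NormedSpace.exp (((θ:ℝ):ℂ) * Complex.I)
    = ((Real.cos θ :ℝ):ℂ) + ((Real.sin θ:ℝ):ℂ) * Complex.I := by
  rw [← Complex.exp_eq_exp_ℂ, Complex.exp_mul_I, ← Complex.ofReal_cos, ← Complex.ofReal_sin]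

lemma keyexp' (θ : ℝ) : NormedSpace.exp (((-θ:ℝ):ℂ) * Complex.I)
    = ((Real.cos θ :ℝ):ℂ) - ((Real.sin θ:ℝ):ℂ) * Complex.I := by
  rw [keyexp]; simp [Real.cos_neg, Real.sin_neg]; ring

lemma hw (φ : ℝ) : NormedSpace.exp (vv φ) = ww φ := by
  rw [Pi.exp_def]
  funext k
  fin_cases k
  · exact keyexp _
  · exact keyexp' _
  · exact keyexp _
  · exact keyexp' _

lemma diag4 (v : Fin 4 → ℂ) : Matrix.diagonal v =
    !![v 0, 0, 0, 0; 0, v 1, 0, 0; 0, 0, v 2, 0; 0, 0, 0, v 3] := by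
  ext i j
  fin_cases i <;> fin_cases j <;> rfl

set_option maxHeartbeats 1000000 in
lemma hdecomp (φ : ℝ) : (φ : ℂ) • A0 = Pm * Matrix.diagonal (vv φ) * Qm := by
  rw [diag4]
  ext i j
  fin_cases i <;> fin_cases j <;>
    simp [A0, Pm, Qm, vv, Matrix.mul_apply, Fin.sum_univ_four, Matrix.smul_apply] <;>
    push_cast <;>
    first
      | ring1
      | linear_combination ((-1:ℂ)/30)*Complex.I*(φ:ℂ) * hs2 + ((-1:ℂ)/14)*Complex.I*(φ:ℂ) * ht2
      | linear_combination ((-1:ℂ)/120)*Complex.I*(φ:ℂ) * hs2 + ((3:ℂ)/56)*Complex.I*(φ:ℂ) * ht2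
      | linear_combination ((-1:ℂ)/30)*Complex.I*(φ:ℂ) * hs2 + ((1:ℂ)/14)*Complex.I*(φ:ℂ) * ht2
      | linear_combination ((-1:ℂ)/120)*Complex.I*(φ:ℂ) * hs2 + ((-3:ℂ)/56)*Complex.I*(φ:ℂ) * ht2
      | linear_combination ((1:ℂ)/120)*Complex.I*(φ:ℂ) * hs2 + ((-3:ℂ)/56)*Complex.I*(φ:ℂ) * ht2
      | linear_combination ((1:ℂ)/30)*Complex.I*(φ:ℂ) * hs2 + ((1:ℂ)/14)*Complex.I*(φ:ℂ) * ht2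
      | linear_combination ((1:ℂ)/120)*Complex.I*(φ:ℂ) * hs2 + ((3:ℂ)/56)*Complex.I*(φ:ℂ) * ht2
      | linear_combination ((1:ℂ)/30)*Complex.I*(φ:ℂ) * hs2 + ((-1:ℂ)/14)*Complex.I*(φ:ℂ) * ht2

end Stmt14Aux

set_option maxHeartbeats 2000000 in
open Stmt14Aux in
/-- Explicit formula for the matrix exponential `exp(φ·A0)`. -/
theorem stmt_14 : ∀ φ : ℝ,
    NormedSpace.exp ((φ : ℂ) • A0) =
      !![a1 φ, a2 φ, a3 φ, a4 φ;
         conj (a2 φ), conj (a1 φ), conj (a4 φ), conj (a3 φ);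
         a3 φ, a4 φ, a1 φ, a2 φ;
         conj (a4 φ), conj (a3 φ), conj (a2 φ), conj (a1 φ)] := by
  intro φ
  have h1 : NormedSpace.exp ((φ : ℂ) • A0) = Pm * Matrix.diagonal (ww φ) * Qm := by
    rw [hdecomp φ]
    have := Matrix.exp_units_conj Um (Matrix.diagonal (vv φ))
    have hco : (↑Um⁻¹ : Matrix (Fin 4) (Fin 4) ℂ) = Qm := rfl
    have hco' : (↑Um : Matrix (Fin 4) (Fin 4) ℂ) = Pm := rfl
    rw [hco, hco'] at this
    rw [this, Matrix.exp_diagonal, hw]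
  rw [h1, diag4]
  ext i j
  fin_cases i <;> fin_cases j <;>
    simp [Pm, Qm, ww, Matrix.mul_apply, Fin.sum_univ_four] <;>
    (try simp only [hca1, hca2, hca3, hca4]) <;> (try simp only [ha1, ha2, ha3, ha4]) <;>
    push_cast <;>
    first
      | ring1
      | linear_combination ((2:ℂ)/15)*Complex.cos ((Real.sqrt 15:ℂ)*(φ:ℂ)/4) * hs2 + ((-2:ℂ)/21)*Complex.cos ((Real.sqrt 7:ℂ)*(φ:ℂ)/4) * ht2
      | linear_combination ((1:ℂ)/30)*Complex.cos ((Real.sqrt 15:ℂ)*(φ:ℂ)/4) * hs2 + ((1:ℂ)/14)*Complex.cos ((Real.sqrt 7:ℂ)*(φ:ℂ)/4) * ht2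
      | linear_combination ((2:ℂ)/15)*Complex.cos ((Real.sqrt 15:ℂ)*(φ:ℂ)/4) * hs2 + ((2:ℂ)/21)*Complex.cos ((Real.sqrt 7:ℂ)*(φ:ℂ)/4) * ht2
      | linear_combination ((1:ℂ)/30)*Complex.cos ((Real.sqrt 15:ℂ)*(φ:ℂ)/4) * hs2 + ((-1:ℂ)/14)*Complex.cos ((Real.sqrt 7:ℂ)*(φ:ℂ)/4) * ht2
      | linear_combination ((-2:ℂ)/15)*Complex.cos ((Real.sqrt 15:ℂ)*(φ:ℂ)/4) * hs2 + ((2:ℂ)/21)*Complex.cos ((Real.sqrt 7:ℂ)*(φ:ℂ)/4) * ht2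
      | linear_combination ((-1:ℂ)/30)*Complex.cos ((Real.sqrt 15:ℂ)*(φ:ℂ)/4) * hs2 + ((-1:ℂ)/14)*Complex.cos ((Real.sqrt 7:ℂ)*(φ:ℂ)/4) * ht2
      | linear_combination ((-2:ℂ)/15)*Complex.cos ((Real.sqrt 15:ℂ)*(φ:ℂ)/4) * hs2 + ((-2:ℂ)/21)*Complex.cos ((Real.sqrt 7:ℂ)*(φ:ℂ)/4) * ht2
      | linear_combination ((-1:ℂ)/30)*Complex.cos ((Real.sqrt 15:ℂ)*(φ:ℂ)/4) * hs2 + ((1:ℂ)/14)*Complex.cos ((Real.sqrt 7:ℂ)*(φ:ℂ)/4) * ht2
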